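/- Let f : ℝ^m × ℝ^n → ℝ^n be continuously differentiable with ‖∂f/∂h(x,h)‖₂ < 1 for all (x,h), and suppose ∂f/∂x(x, h*) = ∂f/∂h(x, h*) =: J at the fixed point h* = f(x, h*). Let F(x) = h*(x) be the implicit function and L : ℝ^n → ℝ a differentiable loss. Then the vector g = J^⊤ ∇L(h*) (the gradient of x ↦ L(f(x, h*)) with h* frozen) is a descent direction for x ↦ L(F(x)): the inner product ⟨∇(L∘F)(x), g⟩ ≥ 0, with equality only if g lies in the kernel of the relevant Jacobians. -/

import Mathlib

/-! Each map `h ↦ f (x, h)` has at most one fixed point: pairing the mean value theorem with a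
norming functional of `b - a` would give `‖b - a‖ < ‖b - a‖` for two of them. Hence the
implicit function theorem for `(x, h) ↦ h - f (x, h)` describes `F` near `x`, with
`DF(x) = (1 - J)⁻¹ J`. As `J` commutes with `(1 - J)⁻¹`, the pairing equals `⟪v, (1 - J)⁻¹ v⟫`
for `v = Jᵀ ∇L(h*)`, and with `w = (1 - J)⁻¹ v` this is `⟪(1 - J) w, w⟫ ≥ (1 - ‖J‖) ‖w‖²`. -/

open scoped RealInnerProductSpace
open ContinuousLinearMap Function

theorem eq_of_isFixedPt_of_norm_fderiv_lt_one {E : Type*} [NormedAddCommGroup E]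
    [NormedSpace ℝ E] {φ : E → E} (hφ : Differentiable ℝ φ) (hlt : ∀ h, ‖fderiv ℝ φ h‖ < 1)
    {a b : E} (ha : IsFixedPt φ a) (hb : IsFixedPt φ b) : a = b := by
  by_contra hab
  have hd : ‖b - a‖ ≠ 0 := by simpa [sub_eq_zero] using Ne.symm hab
  obtain ⟨ℓ, hℓ, hℓd⟩ := exists_dual_vector ℝ (b - a) hd
  obtain ⟨c, -, hc⟩ := domain_mvt (f := fun h => ℓ (φ h)) (s := Set.univ)
    (fun h _ => (ℓ.hasFDerivAt.comp h (hφ h).hasFDerivAt).hasFDerivWithinAt)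
    convex_univ (Set.mem_univ a) (Set.mem_univ b)
  have : ‖b - a‖ < ‖b - a‖ := calc
    ‖b - a‖ = ℓ (φ b) - ℓ (φ a) := by rw [ha.eq, hb.eq, ← map_sub, hℓd]; rfl
    _ = ℓ (fderiv ℝ φ c (b - a)) := hc
    _ ≤ ‖fderiv ℝ φ c (b - a)‖ :=
      (Real.le_norm_self _).trans ((ℓ.le_opNorm _).trans_eq (by rw [hℓ, one_mul]))
    _ ≤ ‖fderiv ℝ φ c‖ * ‖b - a‖ := (fderiv ℝ φ c).le_opNorm _
    _ < ‖b - a‖ := mul_lt_of_lt_one_left (by positivity) (hlt c)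
  exact lt_irrefl _ this

theorem Commute.ringInverse_right {M₀ : Type*} [MonoidWithZero M₀] {a b : M₀}
    (h : Commute a b) : Commute a (Ring.inverse b) := by
  by_cases hb : IsUnit b
  · obtain ⟨u, rfl⟩ := hb
    rw [Ring.inverse_unit]
    exact h.units_inv_right
  · rw [Ring.inverse_non_unit _ hb]
    exact Commute.zero_right a

section FixedPointMap

variable {E H : Type*} [NormedAddCommGroup E] [NormedSpace ℝ E] [CompleteSpace E]
  [NormedAddCommGroup H] [NormedSpace ℝ H] [CompleteSpace H]

theorem hasFDerivAt_of_isFixedPt_iff {f : E × H → H} {F : E → H} {x : E}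
    (hf : ContDiffAt ℝ 1 f (x, F x))
    (hfix : ∀ x' h, IsFixedPt (fun h' => f (x', h')) h ↔ h = F x')
    (hinv : (1 - fderiv ℝ f (x, F x) ∘L inr ℝ E H).IsInvertible) :
    HasFDerivAt F
      ((1 - fderiv ℝ f (x, F x) ∘L inr ℝ E H).inverse ∘L (fderiv ℝ f (x, F x) ∘L inl ℝ E H)) x := by
  set G : E × H → H := fun p => p.2 - f p
  have hG : ContDiffAt ℝ 1 G (x, F x) := contDiffAt_snd.sub hf
  have hG' : fderiv ℝ G (x, F x) = snd ℝ E H - fderiv ℝ f (x, F x) :=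
    (hasFDerivAt_snd.sub (hf.differentiableAt one_ne_zero).hasFDerivAt).fderiv
  have hGr : fderiv ℝ G (x, F x) ∘L inr ℝ E H = 1 - fderiv ℝ f (x, F x) ∘L inr ℝ E H := by
    ext1 h; simp [hG']
  have hGl : fderiv ℝ G (x, F x) ∘L inl ℝ E H = -(fderiv ℝ f (x, F x) ∘L inl ℝ E H) := by
    ext1 h; simp [hG']
  rw [← hGr] at hinv
  have hψ := (hG.hasStrictFDerivAt_implicitFunction one_ne_zero hinv).hasFDerivAt
  rw [hGr, hGl, comp_neg, neg_neg] at hψ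
  refine hψ.congr_of_eventuallyEq ?_
  filter_upwards [hG.eventually_apply_implicitFunction one_ne_zero hinv] with x' hx'
  refine ((hfix x' _).1 ?_).symm
  have : G (x, F x) = 0 := sub_eq_zero.2 ((hfix x (F x)).2 rfl).symm
  exact (sub_eq_zero.1 (hx'.trans this)).symm

end FixedPointMap

theorem isInvertible_one_sub_of_norm_lt_one {𝕜 E : Type*} [NontriviallyNormedField 𝕜]
    [NormedAddCommGroup E] [NormedSpace 𝕜 E] [CompleteSpace E] {J : E →L[𝕜] E} (hJ : ‖J‖ < 1) :
    (1 - J).IsInvertible :=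
  ⟨ContinuousLinearEquiv.unitsEquiv 𝕜 E (Units.oneSub J hJ), rfl⟩

theorem ContinuousLinearMap.commute_inverse_one_sub {R M : Type*} [Ring R] [TopologicalSpace M]
    [AddCommGroup M] [IsTopologicalAddGroup M] [Module R M] (J : M →L[R] M) :
    Commute J (1 - J).inverse := by
  rw [← ringInverse_eq_inverse]
  exact ((Commute.one_right J).sub_right (Commute.refl J)).ringInverse_right

section Contraction

variable {E : Type*} [NormedAddCommGroup E] [InnerProductSpace ℝ E]

theorem one_sub_norm_mul_sq_le_inner_one_sub_apply (J : E →L[ℝ] E) (w : E) :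
    (1 - ‖J‖) * ‖w‖ ^ 2 ≤ ⟪(1 - J) w, w⟫ := by
  have : ⟪J w, w⟫ ≤ ‖J‖ * ‖w‖ ^ 2 := calc
    ⟪J w, w⟫ ≤ ‖J w‖ * ‖w‖ := real_inner_le_norm _ _
    _ ≤ ‖J‖ * ‖w‖ * ‖w‖ := by gcongr; exact J.le_opNorm w
    _ = ‖J‖ * ‖w‖ ^ 2 := by ring
  rw [sub_apply, one_apply_eq_self, inner_sub_left, real_inner_self_eq_norm_sq]
  linarith

theorem inner_inverse_one_sub_apply_pos [CompleteSpace E] {J : E →L[ℝ] E} (hJ : ‖J‖ < 1)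
    {v : E} (hv : v ≠ 0) : 0 < ⟪v, (1 - J).inverse v⟫ := by
  set w := (1 - J).inverse v
  have hvw : (1 - J) w = v := (isInvertible_one_sub_of_norm_lt_one hJ).self_apply_inverse v
  have hw : w ≠ 0 := by rintro hw; rw [hw, map_zero] at hvw; exact hv hvw.symm
  rw [← hvw]
  exact (mul_pos (sub_pos.2 hJ) (by positivity)).trans_le
    (one_sub_norm_mul_sq_le_inner_one_sub_apply J w)

end Contraction

/-- Descent-direction property of the gradient computed at the fixed point: if `f : ℝⁿ × ℝⁿ → ℝⁿ`
is `C¹` with `‖∂f/∂h‖ < 1` everywhere, `F(x) = h*(x)` is the fixed point `h* = f(x,h*)`, and at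
the fixed point the two partial Jacobians coincide, `∂f/∂x = ∂f/∂h = J`, then for a
differentiable loss `L`, the vector `g = Jᵀ ∇L(h*)` (the gradient of `x ↦ L(f(x,h*))` with `h*`
frozen) satisfies `⟨∇(L∘F)(x), g⟩ ≥ 0`, with equality only if `g = 0` (i.e. `∇L(h*)` lies in the
kernel of the relevant Jacobian). -/
theorem stmt_10 (n : ℕ)
    (f : EuclideanSpace ℝ (Fin n) × EuclideanSpace ℝ (Fin n) → EuclideanSpace ℝ (Fin n))
    (hf : ContDiff ℝ 1 f)
    (hJh : ∀ (x h : EuclideanSpace ℝ (Fin n)), ‖fderiv ℝ (fun h' => f (x, h')) h‖ < 1)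
    (F : EuclideanSpace ℝ (Fin n) → EuclideanSpace ℝ (Fin n))
    (hfix : ∀ x, F x = f (x, F x))
    (L : EuclideanSpace ℝ (Fin n) → ℝ)
    (hL : Differentiable ℝ L)
    (x : EuclideanSpace ℝ (Fin n))
    (J : EuclideanSpace ℝ (Fin n) →L[ℝ] EuclideanSpace ℝ (Fin n))
    (hJ_h : fderiv ℝ (fun h' => f (x, h')) (F x) = J)
    (hJ_x : fderiv ℝ (fun x' => f (x', F x)) x = J) :
    0 ≤ ⟪gradient (fun y => L (F y)) x,
          (ContinuousLinearMap.adjoint J) (gradient L (F x))⟫ ∧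
    (⟪gradient (fun y => L (F y)) x,
          (ContinuousLinearMap.adjoint J) (gradient L (F x))⟫ = 0 →
      (ContinuousLinearMap.adjoint J) (gradient L (F x)) = 0) := by
  have hfd : Differentiable ℝ f := hf.differentiable one_ne_zero
  have hfix_iff : ∀ x' h, IsFixedPt (fun h' => f (x', h')) h ↔ h = F x' := fun x' h =>
    ⟨fun hh => eq_of_isFixedPt_of_norm_fderiv_lt_one
      (hfd.comp ((differentiable_const x').prodMk differentiable_id)) (hJh x') hh (hfix x').symm,
     fun hh => hh ▸ (hfix x').symm⟩
  have hinr : fderiv ℝ f (x, F x) ∘L inr ℝ _ _ = J := hJ_h ▸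
    ((hfd _).hasFDerivAt.comp (F x) (hasFDerivAt_prodMk_right x (F x))).fderiv.symm
  have hinl : fderiv ℝ f (x, F x) ∘L inl ℝ _ _ = J := hJ_x ▸
    ((hfd _).hasFDerivAt.comp x (hasFDerivAt_prodMk_left x (F x))).fderiv.symm
  have hJ : ‖J‖ < 1 := hJ_h ▸ hJh x (F x)
  have hF := hasFDerivAt_of_isFixedPt_iff hf.contDiffAt hfix_iff
    (hinr ▸ isInvertible_one_sub_of_norm_lt_one hJ)
  rw [hinr, hinl] at hF
  have hLF : HasFDerivAt (fun y => L (F y)) (fderiv ℝ L (F x) ∘L (1 - J).inverse ∘L J) x :=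
    (hL _).hasFDerivAt.comp x hF
  set v := ContinuousLinearMap.adjoint J (gradient L (F x))
  have key : ⟪gradient (fun y => L (F y)) x, v⟫ = ⟪v, (1 - J).inverse v⟫ := calc
    _ = fderiv ℝ L (F x) ((1 - J).inverse (J v)) := by
      rw [inner_gradient_left, hLF.fderiv]
      rfl
    _ = ⟪gradient L (F x), J ((1 - J).inverse v)⟫ := by
      rw [inner_gradient_left]
      exact congrArg _ (DFunLike.congr_fun (commute_inverse_one_sub J).eq v).symm
    _ = ⟪v, (1 - J).inverse v⟫ := (adjoint_inner_left J _ _).symm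
  rw [key]
  by_cases hv : v = 0
  · simp [hv]
  · exact ⟨(inner_inverse_one_sub_apply_pos hJ hv).le,
      fun h => absurd h (inner_inverse_one_sub_apply_pos hJ hv).ne'⟩
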